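/- arXiv:math/0112008 — 2 statements merged into one kernel-verified Lean document; each statement's English description precedes it below -/
import Mathlib

section
/- Suppose m ≤ d ≤ m + n, let π : ℝ^{n+m} → ℝⁿ be the projection π(x, x_{n+1}, …, x_{n+m}) = x, and let E ⊂ ℝ^{n+m}. Then H^d_∞(E) ≤ C (diam E)^m · H^{d-m}_∞(π(E)), where C = C(m, n, d) is a constant depending only on m, n, d. -/
open MeasureTheory Metric Set
open scoped ENNReal NNReal Topology

noncomputable section

abbrev Euc (n : ℕ) : Type := EuclideanSpace ℝ (Fin n)

/-- `f'` is the weak (distributional) derivative of `f` on the open set `Ω`: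
integration by parts against smooth compactly supported test functions. -/
def HasWeakDerivOn {n : ℕ} {F : Type*} [NormedAddCommGroup F] [NormedSpace ℝ F]
    (f : Euc n → F) (f' : Euc n → (Euc n →L[ℝ] F)) (Ω : Set (Euc n)) : Prop :=
  LocallyIntegrableOn f Ω volume ∧
  AEStronglyMeasurable f' (volume.restrict Ω) ∧
  ∀ φ : Euc n → ℝ, ContDiff ℝ (⊤ : ℕ∞) φ → HasCompactSupport φ → tsupport φ ⊆ Ω →
    ∀ v : Euc n, ∫ x in Ω, φ x • f' x v = - ∫ x in Ω, (fderiv ℝ φ x v) • f x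

/-- membership in the local Sobolev class `W^{1,p}_loc(Ω;F)`, with weak derivative `f'`. -/
def MemW1pLoc {n : ℕ} {F : Type*} [NormedAddCommGroup F] [NormedSpace ℝ F]
    (p : ℝ) (f : Euc n → F) (f' : Euc n → (Euc n →L[ℝ] F)) (Ω : Set (Euc n)) : Prop :=
  HasWeakDerivOn f f' Ω ∧
  ∀ K : Set (Euc n), K ⊆ Ω → IsCompact K →
    (∫⁻ x in K, ENNReal.ofReal (‖f x‖ ^ p + ‖f' x‖ ^ p)) < ⊤

/-- membership in the Sobolev class `W^{1,p}(Ω;F)`, with weak derivative `f'`. -/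
def MemW1p {n : ℕ} {F : Type*} [NormedAddCommGroup F] [NormedSpace ℝ F]
    (p : ℝ) (f : Euc n → F) (f' : Euc n → (Euc n →L[ℝ] F)) (Ω : Set (Euc n)) : Prop :=
  HasWeakDerivOn f f' Ω ∧
  (∫⁻ x in Ω, ENNReal.ofReal (‖f x‖ ^ p + ‖f' x‖ ^ p)) < ⊤

/-- `f` is precisely represented on `Ω`: at every point where the limit of ball
averages exists, `f` equals that limit. -/
def PreciselyRepresented {n : ℕ} {F : Type*} [NormedAddCommGroup F] [NormedSpace ℝ F]
    (f : Euc n → F) (Ω : Set (Euc n)) : Prop :=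
  ∀ x ∈ Ω, ∀ c : F,
    Filter.Tendsto (fun r : ℝ => ⨍ y in ball x r, f y) (𝓝[>] (0:ℝ)) (𝓝 c) → f x = c

/-- the `m`-dimensional Jacobian `|J_m L|` of a linear map `L : ℝ^n → ℝ^m` (`m ≤ n`):
`√(det (L L*))`, which by Cauchy–Binet is the square root of the sum of the squares
of the determinants of the `m×m` minors of the matrix of `L`. -/
def jacDown {n m : ℕ} (L : Euc n →L[ℝ] Euc m) : ℝ :=
  Real.sqrt (LinearMap.det ((L.comp (ContinuousLinearMap.adjoint L)).toLinearMap))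

/-- the `n`-dimensional Jacobian `|J_n L|` of a linear map `L : ℝ^n → ℝ^k` (`k ≥ n`):
`√(det (L* L))`, which by Cauchy–Binet is the square root of the sum of the squares
of the determinants of the `n×n` minors of the matrix of `L`. -/
def jacUp {n k : ℕ} (L : Euc n →L[ℝ] Euc k) : ℝ :=
  Real.sqrt (LinearMap.det (((ContinuousLinearMap.adjoint L).comp L).toLinearMap))

/-- the pair `(x, y) ∈ ℝ^{n+m}` -/
def graphPt {n m : ℕ} (x : Euc n) (y : Euc m) : Euc (n + m) :=
  (WithLp.equiv 2 _).symm (Fin.append (WithLp.equiv 2 _ x) (WithLp.equiv 2 _ y))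

/-- the graph mapping `f̄(x) = (x, f(x)) ∈ ℝ^{n+m}` -/
def graphMap {n m : ℕ} (f : Euc n → Euc m) (x : Euc n) : Euc (n + m) := graphPt x (f x)

/-- the differential of the graph mapping: `v ↦ (v, L v)` -/
def graphDeriv {n m : ℕ} (L : Euc n →L[ℝ] Euc m) : Euc n →L[ℝ] Euc (n + m) :=
  (PiLp.continuousLinearEquiv 2 ℝ _).symm.toContinuousLinearMap.comp
    (ContinuousLinearMap.pi (fun i : Fin (n + m) =>
      Fin.addCases (fun j : Fin n => (EuclideanSpace.proj j : Euc n →L[ℝ] ℝ))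
        (fun j : Fin m => (EuclideanSpace.proj j : Euc m →L[ℝ] ℝ).comp L) i))

/-- `S` is countably `H^d` rectifiable: up to an `H^d`-null set, `S` is covered by
countably many Lipschitz images of subsets of `ℝ^d`. -/
def CountablyRectifiable {X : Type*} [EMetricSpace X] [MeasurableSpace X] [BorelSpace X]
    (d : ℕ) (S : Set X) : Prop :=
  ∃ (E : ℕ → Set (Euc d)) (g : ℕ → Euc d → X),
    (∀ k, ∃ K : ℝ≥0, LipschitzOnWith K (g k) (E k)) ∧
    μH[(d : ℝ)] (S \ ⋃ k, g k '' E k) = 0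

/-- the `q`-dimensional Hausdorff content `H^q_∞(E)`:
`inf Σ_j α_q (diam E_j / 2)^q` over countable coverings, `α_q = π^{q/2}/Γ(q/2+1)`. -/
def hausdorffContent {X : Type*} [PseudoEMetricSpace X] (q : ℝ) (E : Set X) : ℝ≥0∞ :=
  ⨅ (t : ℕ → Set X) (_ : E ⊆ ⋃ k, t k),
    ∑' k, ENNReal.ofReal (Real.pi ^ (q / 2) / Real.Gamma (q / 2 + 1)) *
      (EMetric.diam (t k) / 2) ^ q

/-- the `p`-capacity `γ_p(E)`: the infimum of `∫ (|u|^p + |∇u|^p)` over Sobolev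
functions `u ∈ W^{1,p}(ℝ^n)` with `u ≥ 1` on a neighborhood of `E`. -/
def pCapacity {n : ℕ} (p : ℝ) (E : Set (Euc n)) : ℝ≥0∞ :=
  ⨅ (u : Euc n → ℝ) (u' : Euc n → (Euc n →L[ℝ] ℝ))
    (_ : MemW1p p u u' univ)
    (_ : ∃ U : Set (Euc n), IsOpen U ∧ E ⊆ U ∧ ∀ x ∈ U, 1 ≤ u x),
    ∫⁻ x, ENNReal.ofReal (|u x| ^ p + ‖u' x‖ ^ p)

/-- the Lorentz `L^{m,1}(Ω)` norm: `∫_0^∞ μ_g(s)^{1/m} ds` where `μ_g` is the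
distribution function of `g` on `Ω`. -/
def lorentzNorm {n : ℕ} (m : ℝ) (Ω : Set (Euc n)) (g : Euc n → ℝ) : ℝ≥0∞ :=
  ∫⁻ s in Ioi (0:ℝ), (volume {x ∈ Ω | s < |g x|}) ^ (1 / m)

/-- projection of `ℝ^{n+m}` onto the first `n` coordinates -/
def projE (n m : ℕ) (x : Euc (n + m)) : Euc n :=
  (WithLp.equiv 2 _).symm fun i : Fin n => (WithLp.equiv 2 _ x) (Fin.castAdd m i)

/-- the upper Lebesgue integral `∫* f dμ` -/
def upperLintegral {α : Type*} [MeasurableSpace α] (μ : Measure α) (f : α → ℝ≥0∞) : ℝ≥0∞ :=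
  ⨅ (g : α → ℝ≥0∞) (_ : Measurable g) (_ : ∀ a, f a ≤ g a), ∫⁻ a, g a ∂μ

/-- i.i.d. standard Gaussian `N × nn` matrix ensemble. The column span of such a
random matrix is (a.s.) an `nn`-dimensional subspace of `ℝ^N` whose distribution is
exactly the normalized Haar (rotation-invariant) measure on the Grassmannian `G(N,nn)`. -/
def gaussianMatrix (N nn : ℕ) : Measure (Fin N → Fin nn → ℝ) :=
  Measure.pi fun _ => Measure.pi fun _ => ProbabilityTheory.gaussianReal 0 1

/-- column span of a matrix, as a subspace of `ℝ^N` -/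
def colSpan {N nn : ℕ} (A : Fin N → Fin nn → ℝ) : Submodule ℝ (Euc N) :=
  Submodule.span ℝ (Set.range fun j : Fin nn => ((WithLp.equiv 2 _).symm fun i => A i j : Euc N))

/-- the `nn`-dimensional integralgeometric measure of `E ⊆ ℝ^N`:
`I^nn(E) = ∫_{G(N,nn)} ∫_V N(P_V, E, y) dH^nn(y) dσ_{N,nn}(V)`,
where `N(P_V,E,y)` is the number of points of `E` in `P_V⁻¹{y}` (here expressed as
`Σ' 1` over that set) and the normalized Haar measure `σ_{N,nn}` on the Grassmannian
is realized as the distribution of the column span of a standard Gaussian matrix. -/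
def intGeo (nn : ℕ) {N : ℕ} (E : Set (Euc N)) : ℝ≥0∞ :=
  ∫⁻ A, (∫⁻ y in (colSpan A : Set (Euc N)),
      ∑' _ : ↥(E ∩ {x | ((Submodule.orthogonalProjectionOnto (colSpan A) x : Euc N)) = y}), (1:ℝ≥0∞)
    ∂(μH[(nn : ℝ)])) ∂(gaussianMatrix N nn)

/-- Hölder continuity of `f` on `Ω`. -/
def HolderCont {n m : ℕ} (f : Euc n → Euc m) (Ω : Set (Euc n)) : Prop :=
  ∃ C α : ℝ, 0 < C ∧ 0 < α ∧ α ≤ 1 ∧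
    ∀ x ∈ Ω, ∀ y ∈ Ω, ‖f x - f y‖ ≤ C * ‖x - y‖ ^ α

-- coordinate Lipschitz
lemma dist_coord_le {N : ℕ} (x y : Euc N) (j : Fin N) : dist (x j) (y j) ≤ dist x y := by
  rw [EuclideanSpace.dist_eq]
  have h1 : dist (x j) (y j) = Real.sqrt (dist (x j) (y j) ^ 2) := by
    rw [Real.sqrt_sq dist_nonneg]
  rw [h1]
  apply Real.sqrt_le_sqrt
  exact Finset.single_le_sum (f := fun i => dist (x i) (y i) ^ 2) (fun i _ => sq_nonneg _) (Finset.mem_univ j)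

lemma projE_apply (n m : ℕ) (x : Euc (n + m)) (i : Fin n) :
    projE n m x i = x (Fin.castAdd m i) := rfl

lemma dist_projE_le (n m : ℕ) (x y : Euc (n + m)) :
    dist (projE n m x) (projE n m y) ≤ dist x y := by
  rw [EuclideanSpace.dist_eq, EuclideanSpace.dist_eq]
  apply Real.sqrt_le_sqrt
  rw [Fin.sum_univ_add (fun j : Fin (n + m) => dist (x j) (y j) ^ 2)]
  have : ∑ i : Fin n, dist (projE n m x i) (projE n m y i) ^ 2
      = ∑ i : Fin n, dist (x (Fin.castAdd m i)) (y (Fin.castAdd m i)) ^ 2 := rfl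
  rw [this]
  have h2 : (0:ℝ) ≤ ∑ i : Fin m, dist (x (Fin.natAdd n i)) (y (Fin.natAdd n i)) ^ 2 :=
    Finset.sum_nonneg fun i _ => sq_nonneg _
  linarith

lemma ediam_projE_le (n m : ℕ) (E : Set (Euc (n + m))) :
    EMetric.diam (projE n m '' E) ≤ EMetric.diam E := by
  have : LipschitzWith 1 (projE n m) := by
    apply LipschitzWith.of_dist_le_mul
    intro x y
    simpa using dist_projE_le n m x y
  simpa [EMetric.diam] using this.ediam_image_le E

lemma hc_zero_of_diam_zero {X : Type*} [PseudoEMetricSpace X] {q : ℝ} (hq : 0 < q)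
    {E : Set X} (hE : EMetric.diam E = 0) : hausdorffContent q E = 0 := by
  have h := iInf₂_le (α := ℝ≥0∞) (f := fun (t : ℕ → Set X) (_ : E ⊆ ⋃ k, t k) =>
    ∑' k, ENNReal.ofReal (Real.pi ^ (q / 2) / Real.Gamma (q / 2 + 1)) *
      (EMetric.diam (t k) / 2) ^ q) (fun _ => E) (fun x hx => mem_iUnion.2 ⟨0, hx⟩)
  refine le_antisymm (h.trans_eq ?_) (zero_le)
  simp [hE, ENNReal.zero_rpow_of_pos hq]

lemma hc_zero_eq_top {X : Type*} [PseudoEMetricSpace X] (E : Set X) :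
    hausdorffContent 0 E = ∞ := by
  rw [hausdorffContent]
  simp only [zero_div, Real.rpow_zero, zero_add, Real.Gamma_one, ENNReal.rpow_zero]
  rw [eq_top_iff]
  refine le_iInf fun t => le_iInf fun _ => ?_
  have h1 : ENNReal.ofReal ((1:ℝ)/1) = 1 := by norm_num
  simp only [mul_one, h1]
  rw [ENNReal.tsum_const_eq_top_of_ne_zero one_ne_zero]

lemma hc_mono {X : Type*} [PseudoEMetricSpace X] {q : ℝ} {E F : Set X} (h : E ⊆ F) :
    hausdorffContent q E ≤ hausdorffContent q F := by
  refine le_iInf₂ fun t ht => iInf₂_le t (h.trans ht)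

lemma hc_le_tsum {X : Type*} [PseudoEMetricSpace X] {q : ℝ} (hq : 0 < q)
    {ι : Type*} [Countable ι] (s : ι → Set X) {E : Set X} (hcov : E ⊆ ⋃ i, s i) :
    hausdorffContent q E ≤ ∑' i, ENNReal.ofReal (Real.pi ^ (q / 2) / Real.Gamma (q / 2 + 1)) *
      (EMetric.diam (s i) / 2) ^ q := by
  haveI : Encodable ι := Encodable.ofCountable ι
  set F : Set X → ℝ≥0∞ := fun S => ENNReal.ofReal (Real.pi ^ (q / 2) / Real.Gamma (q / 2 + 1)) *
      (EMetric.diam S / 2) ^ q with hF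
  set t : ℕ → Set X := fun k => (Encodable.decode₂ ι k).elim ∅ s with ht
  have hcov' : E ⊆ ⋃ k, t k := by
    intro x hx
    obtain ⟨i, hi⟩ := mem_iUnion.1 (hcov hx)
    refine mem_iUnion.2 ⟨Encodable.encode i, ?_⟩
    simp [ht, Encodable.decode₂_encode, hi]
  have h1 : hausdorffContent q E ≤ ∑' k, F (t k) := iInf₂_le t hcov'
  have h2 : ∑' k, F (t k) = ∑' i, F (s i) := by
    refine (Function.Injective.tsum_eq (Encodable.encode_injective (α := ι)) ?_).symm.trans ?_
    · intro k hk
      simp only [Function.mem_support, ne_eq] at hk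
      by_contra hr
      have : Encodable.decode₂ ι k = none := by
        rcases h : Encodable.decode₂ ι k with _ | i
        · rfl
        · exact absurd ⟨i, Encodable.decode₂_eq_some.1 h⟩ hr
      apply hk
      simp [ht, this, hF, EMetric.diam, Metric.ediam_empty, ENNReal.zero_rpow_of_pos hq]
    · apply tsum_congr; intro i
      simp [ht, Encodable.decode₂_encode]
  exact h1.trans_eq h2

lemma hc_zero_iUnion {X : Type*} [PseudoEMetricSpace X] {q : ℝ} (hq : 0 < q)
    (A : ℕ → Set X) (hA : ∀ j, hausdorffContent q (A j) = 0) :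
    hausdorffContent q (⋃ j, A j) = 0 := by
  rw [← le_zero_iff]
  refine ENNReal.le_of_forall_pos_le_add fun ε hε _ => ?_
  rw [zero_add]
  -- pick covers
  have key : ∀ j : ℕ, ∃ t : ℕ → Set X, (A j ⊆ ⋃ k, t k) ∧
      (∑' k, ENNReal.ofReal (Real.pi ^ (q / 2) / Real.Gamma (q / 2 + 1)) *
        (EMetric.diam (t k) / 2) ^ q) ≤ (ε : ℝ≥0∞) / 2 ^ (j + 1) := by
    intro j
    have hlt : hausdorffContent q (A j) < (ε : ℝ≥0∞) / 2 ^ (j + 1) := by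
      rw [hA j]
      exact ENNReal.div_pos (by exact_mod_cast hε.ne') (ENNReal.pow_ne_top ENNReal.ofNat_ne_top)
    rw [hausdorffContent, iInf_lt_iff] at hlt
    obtain ⟨t, hlt⟩ := hlt
    rw [iInf_lt_iff] at hlt
    obtain ⟨hcov, hlt⟩ := hlt
    exact ⟨t, hcov, hlt.le⟩
  choose t hcov hsum using key
  have hcov2 : (⋃ j, A j) ⊆ ⋃ p : ℕ × ℕ, t p.1 p.2 := by
    intro x hx
    obtain ⟨j, hj⟩ := mem_iUnion.1 hx
    obtain ⟨k, hk⟩ := mem_iUnion.1 (hcov j hj)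
    exact mem_iUnion.2 ⟨(j, k), hk⟩
  refine (hc_le_tsum hq (fun p : ℕ × ℕ => t p.1 p.2) hcov2).trans ?_
  rw [ENNReal.tsum_prod (f := fun j k => ENNReal.ofReal (Real.pi ^ (q / 2) / Real.Gamma (q / 2 + 1)) * (EMetric.diam (t j k) / 2) ^ q)]
  refine (ENNReal.tsum_le_tsum fun j => hsum j).trans ?_
  have h2 : ∑' j : ℕ, (ε : ℝ≥0∞) / 2 ^ (j + 1) = (ε : ℝ≥0∞) * ((1 - 2⁻¹)⁻¹ * 2⁻¹) := by
    rw [← ENNReal.tsum_geometric, ← ENNReal.tsum_mul_right, ← ENNReal.tsum_mul_left]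
    congr 1 with j
    rw [div_eq_mul_inv, pow_succ, ENNReal.mul_inv (by simp) (by simp), ENNReal.inv_pow]
  have h3 : (1 : ℝ≥0∞) - 2⁻¹ = 2⁻¹ := ENNReal.one_sub_inv_two
  rw [h2, h3, inv_inv, ENNReal.mul_inv_cancel two_ne_zero ENNReal.ofNat_ne_top, mul_one]
lemma tsum_halves (x : ℝ≥0∞) : ∑' j : ℕ, x / 2 ^ (j + 1) = x := by
  have h2 : ∑' j : ℕ, x / 2 ^ (j + 1) = x * ((1 - 2⁻¹)⁻¹ * 2⁻¹) := by
    rw [← ENNReal.tsum_geometric, ← ENNReal.tsum_mul_right, ← ENNReal.tsum_mul_left]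
    congr 1 with j
    rw [div_eq_mul_inv, pow_succ, ENNReal.mul_inv (by simp) (by simp), ENNReal.inv_pow]
  rw [h2, ENNReal.one_sub_inv_two, inv_inv,
    ENNReal.mul_inv_cancel two_ne_zero ENNReal.ofNat_ne_top, mul_one]

lemma coef_pos {q : ℝ} (hq : 0 ≤ q) :
    0 < ENNReal.ofReal (Real.pi ^ (q / 2) / Real.Gamma (q / 2 + 1)) := by
  apply ENNReal.ofReal_pos.2
  apply div_pos (Real.rpow_pos_of_pos Real.pi_pos _)
  apply Real.Gamma_pos_of_pos
  linarith

lemma euc_zero_diam {E : Set (Euc 0)} : EMetric.diam E = 0 := by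
  haveI : Subsingleton (Euc 0) := ⟨fun a b => (WithLp.ext_iff 2).2 (funext fun i => i.elim0)⟩
  exact EMetric.diam_subsingleton (Set.subsingleton_of_subsingleton)
lemma core_bound (m n : ℕ) (d : ℝ) (hm : (m : ℝ) < d) (hnm : 0 < n + m)
    (E : Set (Euc (n + m))) (c : Fin m → ℝ) (D' : ℝ) (hD' : 0 < D')
    (hfib : ∀ x ∈ E, ∀ i : Fin m, |x (Fin.natAdd n i) - c i| ≤ D')
    (hπ : m = 0 ∨ EMetric.diam (projE n m '' E) ≤ ENNReal.ofReal D')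
    (t : ℕ → Set (Euc n)) (hcov : projE n m '' E ⊆ ⋃ k, t k) (ε : ℝ) (hε : 0 < ε) :
    hausdorffContent d E ≤
      (ENNReal.ofReal (Real.pi ^ (d / 2) / Real.Gamma (d / 2 + 1)) *
          ENNReal.ofReal (4 ^ m * (((n : ℝ) + m) / 2) ^ d) * (2 : ℝ≥0∞) ^ (d - m) *
          (ENNReal.ofReal (Real.pi ^ ((d - m) / 2) / Real.Gamma ((d - m) / 2 + 1)))⁻¹) *
        ENNReal.ofReal (D' ^ (m : ℝ)) *
        (∑' k, ENNReal.ofReal (Real.pi ^ ((d - m) / 2) / Real.Gamma ((d - m) / 2 + 1)) *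
          (EMetric.diam (t k) / 2) ^ (d - m)) +
      (ENNReal.ofReal (Real.pi ^ (d / 2) / Real.Gamma (d / 2 + 1)) *
          ENNReal.ofReal (4 ^ m * (((n : ℝ) + m) / 2) ^ d)) *
        ENNReal.ofReal (D' ^ (m : ℝ)) * ENNReal.ofReal ε := by
  have hd0 : 0 < d := lt_of_le_of_lt (Nat.cast_nonneg m) hm
  have hq : 0 < d - m := sub_pos.2 hm
  set q : ℝ := d - m with hqdef
  set A : ℝ≥0∞ := ENNReal.ofReal (Real.pi ^ (d / 2) / Real.Gamma (d / 2 + 1)) with hA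
  set A' : ℝ≥0∞ := ENNReal.ofReal (Real.pi ^ (q / 2) / Real.Gamma (q / 2 + 1)) with hA'
  have hA'0 : A' ≠ 0 := (coef_pos (by linarith)).ne'
  have hA'top : A' ≠ ⊤ := ENNReal.ofReal_ne_top
  set B : ℝ≥0∞ := ENNReal.ofReal (4 ^ m * (((n : ℝ) + m) / 2) ^ d) with hB
  have hB0 : B ≠ 0 := by
    rw [hB]
    refine (ENNReal.ofReal_pos.2 ?_).ne'
    have : (0 : ℝ) < (n : ℝ) + m := by exact_mod_cast hnm
    positivity
  set oD : ℝ≥0∞ := ENNReal.ofReal (D' ^ (m : ℝ)) with hoD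
  have hoD0 : oD ≠ 0 := (ENNReal.ofReal_pos.2 (Real.rpow_pos_of_pos hD' _)).ne'
  set t' : ℕ → Set (Euc n) := fun k => t k ∩ (projE n m '' E) with ht'
  by_cases hfin : ∀ k, EMetric.diam (t' k) ≠ ⊤
  case neg =>
    -- some set has infinite diameter; RHS is ⊤
    push_neg at hfin
    obtain ⟨k, hk⟩ := hfin
    have htk : EMetric.diam (t k) = ⊤ :=
      top_le_iff.1 (hk ▸ EMetric.diam_mono Set.inter_subset_left)
    have hterm : A' * (EMetric.diam (t k) / 2) ^ q = ⊤ := by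
      rw [htk, ENNReal.top_div_of_ne_top ENNReal.ofNat_ne_top, ENNReal.top_rpow_of_pos hq,
        ENNReal.mul_top hA'0]
    have hsum : (∑' k, A' * (EMetric.diam (t k) / 2) ^ q) = ⊤ :=
      top_le_iff.1 (hterm ▸ ENNReal.le_tsum k)
    rw [hsum]
    have hfac : (A * B * (2 : ℝ≥0∞) ^ q * A'⁻¹) * oD ≠ 0 := by
      refine mul_ne_zero (mul_ne_zero (mul_ne_zero (mul_ne_zero ?_ hB0) ?_) ?_) hoD0
      · exact (coef_pos hd0.le).ne'
      · exact (ENNReal.rpow_pos (by norm_num) ENNReal.ofNat_ne_top).ne'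
      · simp [ENNReal.inv_ne_zero, hA'top]
    calc hausdorffContent d E ≤ ⊤ := le_top
    _ ≤ _ := by
        rw [mul_assoc (A * B * (2:ℝ≥0∞)^q * A'⁻¹)] at *
        rw [← mul_assoc]
        rw [ENNReal.mul_top hfac]
        exact le_add_right le_rfl
  case pos =>
  have hcov' : projE n m '' E ⊆ ⋃ k, t' k := by
    intro x hx
    obtain ⟨k, hk⟩ := mem_iUnion.1 (hcov hx)
    exact mem_iUnion.2 ⟨k, hk, hx⟩
  have h1le : (1 : ℝ) ≤ (n : ℝ) + m := by exact_mod_cast hnm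
  set rd : ℕ → ℝ := fun k => (EMetric.diam (t' k)).toReal with hrddef
  set δ : ℕ → ℝ := fun k => min D' ((ε / 2 ^ (k + 1)) ^ q⁻¹) with hδdef
  have hδpos : ∀ k, 0 < δ k := fun k => lt_min hD' (Real.rpow_pos_of_pos (by positivity) _)
  set r : ℕ → ℝ := fun k => max (rd k) (δ k) with hrdef
  have hrpos : ∀ k, 0 < r k := fun k => lt_of_lt_of_le (hδpos k) (le_max_right _ _)
  set L : ℕ → ℕ := fun k => ⌈2 * D' / r k⌉₊ + 1 with hLdef
  set cube : ℕ → (Fin m → ℕ) → Set (Euc (n + m)) := fun k g =>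
    if ∀ i, g i < L k then
      {x | x ∈ E ∧ projE n m x ∈ t' k ∧ ∀ i : Fin m,
        x (Fin.natAdd n i) ∈ Set.Icc (c i - D' + g i * r k) (c i - D' + (g i + 1) * r k)}
    else ∅ with hcubedef
  -- the cubes cover E
  have hcub : E ⊆ ⋃ p : ℕ × (Fin m → ℕ), cube p.1 p.2 := by
    intro x hx
    have hπx : projE n m x ∈ projE n m '' E := Set.mem_image_of_mem _ hx
    obtain ⟨k, hk⟩ := mem_iUnion.1 (hcov' hπx)
    set g : Fin m → ℕ := fun i => ⌊(x (Fin.natAdd n i) - (c i - D')) / r k⌋₊ with hgdef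
    have hu : ∀ i : Fin m, 0 ≤ x (Fin.natAdd n i) - (c i - D') ∧
        x (Fin.natAdd n i) - (c i - D') ≤ 2 * D' := by
      intro i
      have h := hfib x hx i
      rw [abs_le] at h
      constructor <;> linarith [h.1, h.2]
    have hgL : ∀ i, g i < L k := by
      intro i
      have hu2 := (hu i).2
      have hrk' := (hrpos k).le
      have h1 : (x (Fin.natAdd n i) - (c i - D')) / r k ≤ 2 * D' / r k := by
        gcongr
      calc g i ≤ ⌊2 * D' / r k⌋₊ := Nat.floor_mono h1
        _ ≤ ⌈2 * D' / r k⌉₊ := Nat.floor_le_ceil _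
        _ < L k := Nat.lt_succ_self _
    refine mem_iUnion.2 ⟨(k, g), ?_⟩
    show x ∈ cube k g
    rw [hcubedef]
    simp only [if_pos hgL]
    refine ⟨hx, hk, fun i => ?_⟩
    have h0 := (hu i).1
    have hdivnn : 0 ≤ (x (Fin.natAdd n i) - (c i - D')) / r k := div_nonneg h0 (hrpos k).le
    constructor
    · have h2 : (g i : ℝ) ≤ (x (Fin.natAdd n i) - (c i - D')) / r k := Nat.floor_le hdivnn
      have h3 : (g i : ℝ) * r k ≤ x (Fin.natAdd n i) - (c i - D') := by
        rw [← div_mul_cancel₀ (x (Fin.natAdd n i) - (c i - D')) (hrpos k).ne']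
        exact mul_le_mul_of_nonneg_right h2 (hrpos k).le
      linarith
    · have h2 : (x (Fin.natAdd n i) - (c i - D')) / r k < (g i : ℝ) + 1 :=
        Nat.lt_floor_add_one _
      have h3 : x (Fin.natAdd n i) - (c i - D') < ((g i : ℝ) + 1) * r k :=
        (div_lt_iff₀ (hrpos k)).1 h2
      linarith
  -- diameter of each cube
  have hdiamc : ∀ k g, EMetric.diam (cube k g) ≤ ENNReal.ofReal (((n : ℝ) + m) * r k) := by
    intro k g
    by_cases hg : ∀ i, g i < L k
    · rw [hcubedef]
      simp only [if_pos hg]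
      apply EMetric.diam_le
      intro x hx y hy
      rw [edist_dist]
      apply ENNReal.ofReal_le_ofReal
      have hcoord : ∀ j : Fin (n + m), dist (x j) (y j) ≤ r k := by
        intro j
        refine Fin.addCases (motive := fun j => dist (x j) (y j) ≤ r k) (fun i => ?_) (fun i => ?_) j
        · show dist (x (Fin.castAdd m i)) (y (Fin.castAdd m i)) ≤ r k
          have h1 : dist (x (Fin.castAdd m i)) (y (Fin.castAdd m i))
              = dist (projE n m x i) (projE n m y i) := rfl
          rw [h1]
          have h2 : dist (projE n m x) (projE n m y) ≤ rd k := by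
            rw [dist_edist, hrddef]
            exact ENNReal.toReal_mono (hfin k)
              (EMetric.edist_le_diam_of_mem hx.2.1 hy.2.1)
          exact le_trans (dist_coord_le _ _ i) (le_trans h2 (le_max_left _ _))
        · show dist (x (Fin.natAdd n i)) (y (Fin.natAdd n i)) ≤ r k
          have hxi := hx.2.2 i
          have hyi := hy.2.2 i
          rw [Real.dist_eq, abs_le]
          have hexp : ((g i : ℝ) + 1) * r k = (g i : ℝ) * r k + r k := by ring
          constructor <;>
            [ (have := hxi.1; have := hyi.2; linarith [hexp]);
              (have := hxi.2; have := hyi.1; linarith [hexp]) ]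
      rw [EuclideanSpace.dist_eq]
      have hsumb : ∑ j : Fin (n + m), dist (x j) (y j) ^ 2 ≤ ((n : ℝ) + m) * r k ^ 2 := by
        calc ∑ j : Fin (n + m), dist (x j) (y j) ^ 2
            ≤ (Finset.univ : Finset (Fin (n + m))).card • (r k ^ 2) :=
              Finset.sum_le_card_nsmul _ _ _ (fun j _ => by
                have h := hcoord j
                nlinarith [@dist_nonneg _ _ (x j) (y j)])
          _ = ((n : ℝ) + m) * r k ^ 2 := by
              simp [nsmul_eq_mul]
      calc Real.sqrt (∑ j : Fin (n + m), dist (x j) (y j) ^ 2)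
          ≤ Real.sqrt ((((n : ℝ) + m) * r k) ^ 2) := by
            apply Real.sqrt_le_sqrt
            nlinarith [hrpos k, sq_nonneg (r k)]
        _ = ((n : ℝ) + m) * r k := Real.sqrt_sq (by positivity)
    · rw [hcubedef]
      simp [if_neg hg, EMetric.diam]
  -- counting bound on L
  have hL4 : ∀ k, (L k : ℝ) ^ m ≤ (4 * D' / r k) ^ m := by
    intro k
    rcases Nat.eq_zero_or_pos m with h0 | hmpos
    · simp [h0]
    · have hrdD : rd k ≤ D' := by
        rcases hπ with h | h
        · omega
        · have h1 : EMetric.diam (t' k) ≤ ENNReal.ofReal D' :=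
            le_trans (EMetric.diam_mono Set.inter_subset_right) h
          exact ENNReal.toReal_le_of_le_ofReal hD'.le h1
      have hrD : r k ≤ D' := max_le hrdD (min_le_left _ _)
      have h2 : (L k : ℝ) ≤ 2 * D' / r k + 2 := by
        have h3 := Nat.ceil_lt_add_one (a := 2 * D' / r k) (by positivity)
        have h4 : (L k : ℝ) = (⌈2 * D' / r k⌉₊ : ℝ) + 1 := by
          rw [hLdef]; push_cast; ring
        linarith
      have h3 : (2 : ℝ) ≤ 2 * D' / r k := by
        rw [le_div_iff₀ (hrpos k)]
        linarith
      have h5 : 4 * D' / r k = 2 * (2 * D' / r k) := by ring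
      exact pow_le_pow_left₀ (Nat.cast_nonneg _) (by linarith) m
  -- per-k estimate
  have hperk : ∀ k, (∑' g : Fin m → ℕ, A * (EMetric.diam (cube k g) / 2) ^ d)
      ≤ A * B * oD * ENNReal.ofReal (r k ^ q) := by
    intro k
    classical
    set box := Fintype.piFinset fun _ : Fin m => Finset.range (L k) with hboxdef
    have hbox : box.card = L k ^ m := by
      simp [hboxdef, Fintype.card_piFinset]
    set P : ℝ≥0∞ := A * ENNReal.ofReal ((((n : ℝ) + m) * r k / 2) ^ d) with hPdef
    have hterm : ∀ g, A * (EMetric.diam (cube k g) / 2) ^ d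
        ≤ if ∀ i, g i < L k then P else 0 := by
      intro g
      by_cases hg : ∀ i, g i < L k
      · rw [if_pos hg, hPdef]
        refine mul_le_mul_right ?_ A
        calc (EMetric.diam (cube k g) / 2) ^ d
            ≤ (ENNReal.ofReal (((n : ℝ) + m) * r k) / 2) ^ d := by
              gcongr
              exact hdiamc k g
          _ = (ENNReal.ofReal (((n : ℝ) + m) * r k / 2)) ^ d := by
              rw [ENNReal.ofReal_div_of_pos (by norm_num : (0:ℝ) < 2)]
              norm_num
          _ = ENNReal.ofReal ((((n : ℝ) + m) * r k / 2) ^ d) := by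
              rw [ENNReal.ofReal_rpow_of_pos (by positivity)]
      · rw [if_neg hg]
        have hempty : cube k g = ∅ := by rw [hcubedef]; simp [if_neg hg]
        rw [hempty]
        simp [EMetric.diam, Metric.ediam_empty, ENNReal.zero_rpow_of_pos hd0, zero_div]
    have hsum_g : (∑' g : Fin m → ℕ, A * (EMetric.diam (cube k g) / 2) ^ d)
        ≤ (L k ^ m : ℕ) * P := by
      refine (ENNReal.tsum_le_tsum hterm).trans ?_
      rw [tsum_eq_sum (s := box) (f := fun g => if ∀ i, g i < L k then P else 0)
        (fun g hg => by
          show (if ∀ i, g i < L k then P else 0) = 0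
          rw [if_neg]
          intro hall
          exact hg (by
            rw [hboxdef, Fintype.mem_piFinset]
            intro i
            rw [Finset.mem_range]
            exact hall i))]
      calc ∑ g ∈ box, (if ∀ i, g i < L k then P else 0)
          ≤ box.card • P := Finset.sum_le_card_nsmul _ _ _ (fun g _ => by
            split
            · exact le_rfl
            · exact zero_le)
        _ = (L k ^ m : ℕ) * P := by rw [hbox, nsmul_eq_mul]
    refine hsum_g.trans ?_
    have hcast : ((L k ^ m : ℕ) : ℝ≥0∞) = ENNReal.ofReal ((L k : ℝ) ^ m) := by
      rw [Nat.cast_pow, ENNReal.ofReal_pow (Nat.cast_nonneg _), ENNReal.ofReal_natCast]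
    rw [hcast, hPdef]
    have hralg : (4 * D' / r k) ^ m * ((((n : ℝ) + m) * r k / 2) ^ d)
        = (4 ^ m * (((n : ℝ) + m) / 2) ^ d) * D' ^ (m : ℝ) * r k ^ q := by
      have h1 : ((n : ℝ) + m) * r k / 2 = ((n : ℝ) + m) / 2 * r k := by ring
      rw [h1, Real.mul_rpow (by positivity) (hrpos k).le, div_pow, mul_pow, hqdef,
        Real.rpow_sub (hrpos k), ← Real.rpow_natCast (r k) m, ← Real.rpow_natCast D' m]
      have hrm : r k ^ (m : ℝ) ≠ 0 := (Real.rpow_pos_of_pos (hrpos k) _).ne'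
      field_simp
    calc ENNReal.ofReal ((L k : ℝ) ^ m) * (A * ENNReal.ofReal ((((n : ℝ) + m) * r k / 2) ^ d))
        ≤ ENNReal.ofReal ((4 * D' / r k) ^ m) * (A * ENNReal.ofReal ((((n : ℝ) + m) * r k / 2) ^ d)) := by
          exact mul_le_mul_left (ENNReal.ofReal_le_ofReal (hL4 k)) _
      _ = A * ENNReal.ofReal ((4 * D' / r k) ^ m * ((((n : ℝ) + m) * r k / 2) ^ d)) := by
          rw [ENNReal.ofReal_mul (by positivity)]
          ring
      _ = A * B * oD * ENNReal.ofReal (r k ^ q) := by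
          rw [hralg, ENNReal.ofReal_mul (by positivity), ENNReal.ofReal_mul (by positivity)]
          rw [hB, hoD]
          ring
  -- bound ofReal (r k ^ q)
  have hrk : ∀ k, ENNReal.ofReal (r k ^ q)
      ≤ (2:ℝ≥0∞) ^ q * A'⁻¹ * (A' * (EMetric.diam (t k) / 2) ^ q) + ENNReal.ofReal (ε / 2 ^ (k + 1)) := by
    intro k
    have he1 : A'⁻¹ * A' = 1 := ENNReal.inv_mul_cancel hA'0 hA'top
    have he3 : (2:ℝ≥0∞) ^ q ≠ ⊤ := ENNReal.rpow_ne_top_of_nonneg hq.le ENNReal.ofNat_ne_top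
    have he2 : (2:ℝ≥0∞) ^ q ≠ 0 := (ENNReal.rpow_pos (by norm_num) ENNReal.ofNat_ne_top).ne'
    rcases max_choice (rd k) (δ k) with hc | hc
    · have hceq : r k = rd k := hc
      rw [hceq]
      have hofr : ENNReal.ofReal (rd k ^ q) = (EMetric.diam (t' k)) ^ q := by
        rw [hrddef]
        simp only []
        rw [ENNReal.toReal_rpow, ENNReal.ofReal_toReal
          (ENNReal.rpow_ne_top_of_nonneg hq.le (hfin k))]
      rw [hofr]
      refine le_add_right ?_
      calc (EMetric.diam (t' k)) ^ q
          ≤ (EMetric.diam (t k)) ^ q :=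
            ENNReal.rpow_le_rpow (EMetric.diam_mono Set.inter_subset_left) hq.le
        _ = (2:ℝ≥0∞) ^ q * A'⁻¹ * (A' * (EMetric.diam (t k) / 2) ^ q) := by
            rw [ENNReal.div_rpow_of_nonneg _ _ hq.le]
            rw [mul_assoc, ← mul_assoc A'⁻¹ A', he1, one_mul,
              ENNReal.mul_div_cancel he2 he3]
    · have hceq : r k = δ k := hc
      rw [hceq]
      have h1 : δ k ^ q ≤ ε / 2 ^ (k + 1) := by
        have h2 : δ k ≤ (ε / 2 ^ (k + 1)) ^ q⁻¹ := min_le_right _ _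
        calc δ k ^ q ≤ ((ε / 2 ^ (k + 1)) ^ q⁻¹) ^ q :=
              Real.rpow_le_rpow (hδpos k).le h2 hq.le
          _ = ε / 2 ^ (k + 1) := Real.rpow_inv_rpow (by positivity) hq.ne'
      exact le_add_left (ENNReal.ofReal_le_ofReal h1)
  -- assemble
  have hhalves : (∑' k : ℕ, ENNReal.ofReal (ε / 2 ^ (k + 1))) = ENNReal.ofReal ε := by
    have h1 : ∀ k : ℕ, ENNReal.ofReal (ε / 2 ^ (k + 1)) = ENNReal.ofReal ε / 2 ^ (k + 1) := by
      intro k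
      rw [ENNReal.ofReal_div_of_pos (by positivity), ENNReal.ofReal_pow (by norm_num)]
      norm_num
    simp_rw [h1]
    exact tsum_halves _
  calc hausdorffContent d E
      ≤ ∑' p : ℕ × (Fin m → ℕ), A * (EMetric.diam (cube p.1 p.2) / 2) ^ d := by
        have := hc_le_tsum hd0 (fun p : ℕ × (Fin m → ℕ) => cube p.1 p.2) hcub
        rw [← hA] at this
        exact this
    _ = ∑' k : ℕ, ∑' g : Fin m → ℕ, A * (EMetric.diam (cube k g) / 2) ^ d :=
        ENNReal.tsum_prod (f := fun k g => A * (EMetric.diam (cube k g) / 2) ^ d)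
    _ ≤ ∑' k : ℕ, A * B * oD * ((2:ℝ≥0∞) ^ q * A'⁻¹ * (A' * (EMetric.diam (t k) / 2) ^ q)
          + ENNReal.ofReal (ε / 2 ^ (k + 1))) := by
        refine ENNReal.tsum_le_tsum fun k => (hperk k).trans ?_
        exact mul_le_mul_right (hrk k) _
    _ = A * B * oD * ((2:ℝ≥0∞) ^ q * A'⁻¹ * (∑' k, A' * (EMetric.diam (t k) / 2) ^ q)
          + ENNReal.ofReal ε) := by
        rw [ENNReal.tsum_mul_left, ENNReal.tsum_add, ENNReal.tsum_mul_left, hhalves]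
    _ = _ := by
        rw [mul_add]
        ring

lemma hc_exists_cover {X : Type*} [PseudoEMetricSpace X] {q : ℝ} {E : Set X} {v : ℝ≥0∞}
    (h : hausdorffContent q E < v) : ∃ t : ℕ → Set X, (E ⊆ ⋃ k, t k) ∧
      (∑' k, ENNReal.ofReal (Real.pi ^ (q / 2) / Real.Gamma (q / 2 + 1)) *
        (EMetric.diam (t k) / 2) ^ q) < v := by
  unfold hausdorffContent at h
  obtain ⟨t, ht⟩ := iInf_lt_iff.1 h
  obtain ⟨hcov, hlt⟩ := iInf_lt_iff.1 ht
  exact ⟨t, hcov, hlt⟩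

lemma main_bound (m n : ℕ) (d : ℝ) (hm : (m : ℝ) < d) :
    ∃ K : ℝ≥0∞, K ≠ 0 ∧ K ≠ ⊤ ∧ ∀ (E : Set (Euc (n + m))) (c : Fin m → ℝ) (D' : ℝ), 0 < D' →
      (∀ x ∈ E, ∀ i : Fin m, |x (Fin.natAdd n i) - c i| ≤ D') →
      (m = 0 ∨ EMetric.diam (projE n m '' E) ≤ ENNReal.ofReal D') →
      hausdorffContent d E ≤ K * ENNReal.ofReal (D' ^ (m : ℝ)) *
        hausdorffContent (d - m) (projE n m '' E) := by
  have hd0 : 0 < d := lt_of_le_of_lt (Nat.cast_nonneg m) hm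
  have hq : 0 < d - m := sub_pos.2 hm
  rcases Nat.eq_zero_or_pos (n + m) with h0 | hnm
  · refine ⟨1, one_ne_zero, ENNReal.one_ne_top, fun E c D' hD' hfib hπ => ?_⟩
    haveI : Subsingleton (Euc (n + m)) :=
      ⟨fun a b => (WithLp.ext_iff 2).2 (funext fun i => absurd i.isLt (by omega))⟩
    have hdE : EMetric.diam E = 0 := EMetric.diam_subsingleton Set.subsingleton_of_subsingleton
    rw [hc_zero_of_diam_zero hd0 hdE]
    exact zero_le
  · set A : ℝ≥0∞ := ENNReal.ofReal (Real.pi ^ (d / 2) / Real.Gamma (d / 2 + 1)) with hA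
    set A' : ℝ≥0∞ :=
      ENNReal.ofReal (Real.pi ^ ((d - m) / 2) / Real.Gamma ((d - m) / 2 + 1)) with hA'
    set B : ℝ≥0∞ := ENNReal.ofReal (4 ^ m * (((n : ℝ) + m) / 2) ^ d) with hB
    have hA'0 : A' ≠ 0 := (coef_pos (by linarith)).ne'
    have hA'top : A' ≠ ⊤ := ENNReal.ofReal_ne_top
    set K1 : ℝ≥0∞ := A * B with hK1
    set K2 : ℝ≥0∞ := K1 * (2 : ℝ≥0∞) ^ (d - m) * A'⁻¹ with hK2
    set K : ℝ≥0∞ := K2 + K1 + 1 with hK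
    have hK1top : K1 ≠ ⊤ := ENNReal.mul_ne_top ENNReal.ofReal_ne_top ENNReal.ofReal_ne_top
    have hK2top : K2 ≠ ⊤ := ENNReal.mul_ne_top
      (ENNReal.mul_ne_top hK1top (ENNReal.rpow_ne_top_of_nonneg hq.le ENNReal.ofNat_ne_top))
      (ENNReal.inv_ne_top.2 hA'0)
    have hKtop : K ≠ ⊤ := by
      rw [hK]
      exact ENNReal.add_ne_top.2 ⟨ENNReal.add_ne_top.2 ⟨hK2top, hK1top⟩, ENNReal.one_ne_top⟩
    have hK0 : K ≠ 0 := by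
      rw [hK]
      exact (lt_of_lt_of_le zero_lt_one le_add_self).ne'
    refine ⟨K, hK0, hKtop, fun E c D' hD' hfib hπ => ?_⟩
    set oD : ℝ≥0∞ := ENNReal.ofReal (D' ^ (m : ℝ)) with hoD
    have hoD0 : oD ≠ 0 := (ENNReal.ofReal_pos.2 (Real.rpow_pos_of_pos hD' _)).ne'
    have hoDtop : oD ≠ ⊤ := ENNReal.ofReal_ne_top
    by_cases hH : hausdorffContent (d - m) (projE n m '' E) = ⊤
    · rw [hH, ENNReal.mul_top (mul_ne_zero hK0 hoD0)]
      exact le_top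
    · set Q : ℝ≥0∞ := K * oD with hQ
      have hQ0 : Q ≠ 0 := mul_ne_zero hK0 hoD0
      have hQtop : Q ≠ ⊤ := ENNReal.mul_ne_top hKtop hoDtop
      refine ENNReal.le_of_forall_pos_le_add fun ε' hε' _ => ?_
      set ε : ℝ := min 1 ((ε' : ℝ) / Q.toReal) with hε
      have hεpos : 0 < ε :=
        lt_min zero_lt_one (div_pos (by exact_mod_cast hε') (ENNReal.toReal_pos hQ0 hQtop))
      have hHlt : hausdorffContent (d - m) (projE n m '' E)
          < hausdorffContent (d - m) (projE n m '' E) + ENNReal.ofReal ε :=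
        ENNReal.lt_add_right hH (ENNReal.ofReal_pos.2 hεpos).ne'
      obtain ⟨t, hcov, hS⟩ := hc_exists_cover hHlt
      have hcore := core_bound m n d hm hnm E c D' hD' hfib hπ t hcov ε hεpos
      have hQε : Q * ENNReal.ofReal ε ≤ (ε' : ℝ≥0∞) := by
        have h1 : ε ≤ (ε' : ℝ) / Q.toReal := min_le_right _ _
        calc Q * ENNReal.ofReal ε ≤ Q * ENNReal.ofReal ((ε' : ℝ) / Q.toReal) :=
              mul_le_mul_right (ENNReal.ofReal_le_ofReal h1) Q
          _ = ENNReal.ofReal (Q.toReal * ((ε' : ℝ) / Q.toReal)) := by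
              rw [ENNReal.ofReal_mul ENNReal.toReal_nonneg, ENNReal.ofReal_toReal hQtop]
          _ = ENNReal.ofReal (ε' : ℝ) := by
              rw [mul_div_cancel₀ _ (ENNReal.toReal_pos hQ0 hQtop).ne']
          _ = (ε' : ℝ≥0∞) := ENNReal.ofReal_coe_nnreal
      calc hausdorffContent d E
          ≤ K2 * oD * (∑' k, A' * (EMetric.diam (t k) / 2) ^ (d - m))
              + K1 * oD * ENNReal.ofReal ε := hcore
        _ ≤ K2 * oD * (hausdorffContent (d - m) (projE n m '' E) + ENNReal.ofReal ε)
              + K1 * oD * ENNReal.ofReal ε := by gcongr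
        _ = K2 * oD * hausdorffContent (d - m) (projE n m '' E)
              + (K2 + K1) * oD * ENNReal.ofReal ε := by ring
        _ ≤ K * oD * hausdorffContent (d - m) (projE n m '' E)
              + K * oD * ENNReal.ofReal ε := by
            have h1 : K2 ≤ K := by rw [hK]; exact le_add_right le_self_add
            have h2 : K2 + K1 ≤ K := by rw [hK]; exact le_add_right le_rfl
            gcongr
        _ ≤ K * oD * hausdorffContent (d - m) (projE n m '' E) + ε' := by
            have hQε' : K * oD * ENNReal.ofReal ε ≤ (ε' : ℝ≥0∞) := by
              rw [hQ] at hQε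
              exact hQε
            exact add_le_add le_rfl hQε'


/-- **Hausdorff content and projection** (Lemma 4.1). If `m ≤ d ≤ m + n` and
`π : ℝ^{n+m} → ℝⁿ` is the projection onto the first `n` coordinates, then there is
a constant `C = C(m,n,d)` such that
`H^d_∞(E) ≤ C (diam E)^m H^{d-m}_∞(π(E))` for every `E ⊆ ℝ^{n+m}`. -/
theorem hausdorffContent_le_diam_mul_content_proj (m n : ℕ) (d : ℝ)
    (hd1 : (m : ℝ) ≤ d) (hd2 : d ≤ (m : ℝ) + n) :
    ∃ C : ℝ≥0∞, C ≠ ⊤ ∧ ∀ E : Set (Euc (n + m)),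
      hausdorffContent d E ≤
        C * (EMetric.diam E) ^ (m : ℝ) * hausdorffContent (d - m) (projE n m '' E) := by
  rcases hd1.lt_or_eq with hm | hm
  · -- m < d
    obtain ⟨K, hK0, hKtop, hMAIN⟩ := main_bound m n d hm
    have hd0 : 0 < d := lt_of_le_of_lt (Nat.cast_nonneg m) hm
    have hq : 0 < d - m := sub_pos.2 hm
    refine ⟨K + 1, ENNReal.add_ne_top.2 ⟨hKtop, ENNReal.one_ne_top⟩, fun E => ?_⟩
    have hK10 : K + 1 ≠ 0 := (lt_of_lt_of_le zero_lt_one le_add_self).ne'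
    by_cases hdE : EMetric.diam E = 0
    · rw [hc_zero_of_diam_zero hd0 hdE]
      exact zero_le
    · have hE : E.Nonempty := by
        rcases E.eq_empty_or_nonempty with h | h
        · exact absurd (by rw [h]; exact EMetric.diam_empty) hdE
        · exact h
      obtain ⟨e₀, he₀⟩ := hE
      by_cases htop : EMetric.diam E = ⊤
      · rcases Nat.eq_zero_or_pos m with hm0 | hmpos
        · -- m = 0
          have hm0' : ((m : ℕ) : ℝ) = 0 := by rw [hm0]; norm_num
          have h1 : (EMetric.diam E) ^ ((m : ℕ) : ℝ) = 1 := by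
            rw [hm0', ENNReal.rpow_zero]
          have h2 := hMAIN E (fun _ => 0) 1 one_pos
            (fun x hx i => absurd i.isLt (by omega)) (Or.inl hm0)
          have h3 : ENNReal.ofReal ((1:ℝ) ^ ((m:ℕ) : ℝ)) = 1 := by
            rw [Real.one_rpow]; exact ENNReal.ofReal_one
          rw [h3, mul_one] at h2
          refine h2.trans ?_
          rw [h1, mul_one]
          gcongr
          exact le_self_add
        · -- m > 0
          have hmR : 0 < ((m:ℕ) : ℝ) := by exact_mod_cast hmpos
          rw [htop, ENNReal.top_rpow_of_pos hmR]
          by_cases hH : hausdorffContent (d - m) (projE n m '' E) = 0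
          · have hcover : E = ⋃ R : ℕ, E ∩ Metric.closedBall e₀ ((R:ℝ) + 1) := by
              ext x
              constructor
              · intro hx
                refine mem_iUnion.2 ⟨⌈dist x e₀⌉₊, hx, ?_⟩
                rw [Metric.mem_closedBall]
                calc dist x e₀ ≤ (⌈dist x e₀⌉₊ : ℝ) := Nat.le_ceil _
                  _ ≤ (⌈dist x e₀⌉₊ : ℝ) + 1 := le_add_of_nonneg_right zero_le_one
              · intro hx
                obtain ⟨R, hR⟩ := mem_iUnion.1 hx
                exact hR.1
            have hzero : ∀ R : ℕ, hausdorffContent d (E ∩ Metric.closedBall e₀ ((R:ℝ)+1)) = 0 := by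
              intro R
              have hball : ∀ x ∈ E ∩ Metric.closedBall e₀ ((R:ℝ)+1), ∀ i : Fin m,
                  |x (Fin.natAdd n i) - e₀ (Fin.natAdd n i)| ≤ 2 * ((R:ℝ)+1) := by
                intro x hx i
                have h3 : dist (x (Fin.natAdd n i)) (e₀ (Fin.natAdd n i)) ≤ dist x e₀ :=
                  dist_coord_le x e₀ _
                have h4 : dist x e₀ ≤ (R:ℝ)+1 := Metric.mem_closedBall.1 hx.2
                rw [Real.dist_eq] at h3
                have h5 : (0:ℝ) ≤ (R:ℝ) + 1 := by positivity
                linarith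
              have hπb : EMetric.diam (projE n m '' (E ∩ Metric.closedBall e₀ ((R:ℝ)+1)))
                  ≤ ENNReal.ofReal (2*((R:ℝ)+1)) := by
                refine le_trans (ediam_projE_le _ _ _) ?_
                apply EMetric.diam_le
                intro x hx y hy
                rw [edist_dist]
                apply ENNReal.ofReal_le_ofReal
                have h5 : dist x e₀ ≤ (R:ℝ)+1 := Metric.mem_closedBall.1 hx.2
                have h6 : dist y e₀ ≤ (R:ℝ)+1 := Metric.mem_closedBall.1 hy.2
                calc dist x y ≤ dist x e₀ + dist e₀ y := dist_triangle _ _ _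
                  _ ≤ 2*((R:ℝ)+1) := by rw [dist_comm e₀ y]; linarith
              have h7 := hMAIN (E ∩ Metric.closedBall e₀ ((R:ℝ)+1))
                (fun i => e₀ (Fin.natAdd n i)) (2*((R:ℝ)+1)) (by positivity) hball (Or.inr hπb)
              have h8 : hausdorffContent (d-m) (projE n m '' (E ∩ Metric.closedBall e₀ ((R:ℝ)+1))) = 0 := by
                refine le_antisymm ?_ (zero_le)
                rw [← hH]
                exact hc_mono (Set.image_mono Set.inter_subset_left)
              rw [h8, mul_zero] at h7
              exact le_antisymm h7 (zero_le)
            have h9 : hausdorffContent d E = 0 := by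
              rw [hcover]
              exact hc_zero_iUnion hd0 _ hzero
            rw [h9]
            exact zero_le
          · have h10 : (K+1) * ⊤ * hausdorffContent (d - m) (projE n m '' E) = ⊤ := by
              rw [ENNReal.mul_top hK10, ENNReal.top_mul hH]
            rw [h10]
            exact le_top
      · -- 0 < diam E < ⊤
        set D' : ℝ := (EMetric.diam E).toReal with hD'def
        have hD'pos : 0 < D' := ENNReal.toReal_pos hdE htop
        have hfib : ∀ x ∈ E, ∀ i : Fin m, |x (Fin.natAdd n i) - e₀ (Fin.natAdd n i)| ≤ D' := by
          intro x hx i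
          have h3 : dist (x (Fin.natAdd n i)) (e₀ (Fin.natAdd n i)) ≤ dist x e₀ :=
            dist_coord_le _ _ _
          have h4 : dist x e₀ ≤ D' := by
            rw [dist_edist, hD'def]
            exact ENNReal.toReal_mono htop (EMetric.edist_le_diam_of_mem hx he₀)
          rw [Real.dist_eq] at h3
          linarith
        have hπ : EMetric.diam (projE n m '' E) ≤ ENNReal.ofReal D' := by
          rw [hD'def, ENNReal.ofReal_toReal htop]
          exact ediam_projE_le n m E
        have h7 := hMAIN E (fun i => e₀ (Fin.natAdd n i)) D' hD'pos hfib (Or.inr hπ)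
        have h8 : ENNReal.ofReal (D' ^ ((m:ℕ):ℝ)) = (EMetric.diam E) ^ ((m:ℕ):ℝ) := by
          rw [hD'def, ENNReal.toReal_rpow, ENNReal.ofReal_toReal
            (ENNReal.rpow_ne_top_of_nonneg (Nat.cast_nonneg m) htop)]
        rw [h8] at h7
        refine h7.trans ?_
        gcongr
        exact le_self_add
  · -- d = m
    refine ⟨1, ENNReal.one_ne_top, fun E => ?_⟩
    have hdm : d - m = 0 := by rw [← hm]; ring
    rw [hdm, hc_zero_eq_top]
    by_cases hz : (EMetric.diam E) ^ ((m:ℕ):ℝ) = 0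
    · rcases ENNReal.rpow_eq_zero_iff.1 hz with ⟨h1, h2⟩ | ⟨h1, h2⟩
      · have hd0 : 0 < d := by rw [← hm]; exact h2
        rw [hc_zero_of_diam_zero hd0 h1]
        exact zero_le
      · exact absurd h2 (not_lt.2 (Nat.cast_nonneg m))
    · rw [one_mul, ENNReal.mul_top hz]
      exact le_top


end
end

section
/- (Eilenberg inequality) Suppose m ≤ d ≤ m + n, A ⊂ ℝ^{n+m}, and h : A → ℝᵐ is Lipschitz. Then ∫*_{ℝᵐ} H^{d-m}(A ∩ h⁻¹(y)) dH^m(y) ≤ C (Lip h)^m H^d(A), where ∫* denotes the upper integral, Lip h is the Lipschitz constant of h, and C = C(m) depends only on m. -/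
open MeasureTheory Metric Set
open scoped ENNReal NNReal Topology

noncomputable section

section EilenbergAux

open Filter

private lemma lipschitzOnWith_ediam_image_le {X Y : Type*} [PseudoEMetricSpace X]
    [PseudoEMetricSpace Y] {K : ℝ≥0} {f : X → Y} {s : Set X} (hf : LipschitzOnWith K f s) :
    EMetric.diam (f '' s) ≤ K * EMetric.diam s := by
  apply EMetric.diam_le
  rintro _ ⟨a, ha, rfl⟩ _ ⟨b, hb, rfl⟩
  exact (hf ha hb).trans (mul_le_mul_right (EMetric.edist_le_diam_of_mem ha hb) _)

private lemma euc_hausdorff_le (m : ℕ) :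
    ∃ Cm : ℝ≥0∞, Cm ≠ ⊤ ∧ 1 ≤ Cm ∧
      ∀ S : Set (Euc m), μH[(m:ℝ)] S ≤ Cm * EMetric.diam S ^ (m:ℝ) := by
  set K : ℝ≥0 := (Fintype.card (Fin m) : ℝ≥0) ^ (1 / (2:ℝ≥0∞)).toReal with hKdef
  refine ⟨max ((K:ℝ≥0∞) ^ (m:ℝ)) 1, ?_, le_max_right _ _, ?_⟩
  · exact (max_lt (ENNReal.rpow_lt_top_of_nonneg (by positivity) ENNReal.coe_ne_top)
      ENNReal.one_lt_top).ne
  · intro S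
    have e1 : LipschitzWith K ((WithLp.equiv 2 (Fin m → ℝ)).symm) :=
      (PiLp.antilipschitzWith_ofLp 2 (fun _ : Fin m => ℝ)).to_rightInverse
        (WithLp.equiv 2 (Fin m → ℝ)).apply_symm_apply
    have hpi : (μH[(m:ℝ)] : Measure (Fin m → ℝ)) = volume := by
      simpa using (hausdorffMeasure_pi_real (ι := Fin m))
    calc μH[(m:ℝ)] S
        = μH[(m:ℝ)] ((WithLp.equiv 2 (Fin m → ℝ)).symm ''
            ((WithLp.equiv 2 (Fin m → ℝ)) '' S)) := by
          rw [Set.image_image]; simp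
      _ ≤ (K : ℝ≥0∞) ^ (m:ℝ) * μH[(m:ℝ)] ((WithLp.equiv 2 (Fin m → ℝ)) '' S) :=
          e1.hausdorffMeasure_image_le (by positivity) _
      _ ≤ (K : ℝ≥0∞) ^ (m:ℝ) * EMetric.diam S ^ (m:ℝ) := by
          gcongr
          rw [hpi]
          calc volume ((WithLp.equiv 2 (Fin m → ℝ)) '' S)
              ≤ EMetric.diam ((WithLp.equiv 2 (Fin m → ℝ)) '' S) ^ Fintype.card (Fin m) :=
                Real.volume_pi_le_diam_pow _
            _ ≤ EMetric.diam S ^ (m:ℕ) := by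
                rw [Fintype.card_fin]
                refine pow_le_pow_left' ?_ m
                have := (PiLp.lipschitzWith_ofLp 2 (fun _ : Fin m => ℝ)).ediam_image_le S
                simp only [ENNReal.coe_one, one_mul] at this
                exact this
            _ = EMetric.diam S ^ (m:ℝ) := (ENNReal.rpow_natCast _ m).symm
      _ ≤ max ((K:ℝ≥0∞) ^ (m:ℝ)) 1 * EMetric.diam S ^ (m:ℝ) :=
          mul_le_mul_left (le_max_left _ _) _

private def stage {X : Type*} [EMetricSpace X] (d : ℝ) (r : ℝ≥0∞) (s : Set X) : ℝ≥0∞ :=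
  ⨅ (t : ℕ → Set X) (_ : s ⊆ ⋃ k, t k) (_ : ∀ k, EMetric.diam (t k) ≤ r),
    ∑' k, ⨆ _ : (t k).Nonempty, EMetric.diam (t k) ^ d

private lemma hausdorff_eq_stage {X : Type*} [EMetricSpace X] [MeasurableSpace X] [BorelSpace X]
    (d : ℝ) (s : Set X) :
    μH[d] s = ⨆ (r : ℝ≥0∞) (_ : 0 < r), stage d r s :=
  MeasureTheory.Measure.hausdorffMeasure_apply d s

private lemma stage_anti {X : Type*} [EMetricSpace X] (d : ℝ) {r r' : ℝ≥0∞} (hrr : r' ≤ r)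
    (s : Set X) : stage d r s ≤ stage d r' s := by
  refine le_iInf fun t => le_iInf fun hcov => le_iInf fun hdia => ?_
  exact iInf_le_of_le t (iInf_le_of_le hcov (iInf_le_of_le (fun k => (hdia k).trans hrr) le_rfl))

end EilenbergAux

/-- **Eilenberg inequality** (Lemma 3.1). There is a constant `C = C(m)` such
that: if `m ≤ d ≤ m + n`, `A ⊆ ℝ^{n+m}` and `h : A → ℝᵐ` is Lipschitz with
constant `Lip h`, then
`∫*_{ℝᵐ} H^{d-m}(A ∩ h⁻¹(y)) dH^m(y) ≤ C (Lip h)^m H^d(A)`,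
where `∫*` denotes the upper integral. -/
theorem eilenberg_inequality (m : ℕ) (hm : 1 ≤ m) :
    ∃ C : ℝ≥0∞, C ≠ ⊤ ∧
      ∀ (n : ℕ) (d : ℝ), (m : ℝ) ≤ d → d ≤ (m : ℝ) + n →
      ∀ (A : Set (Euc (n + m))) (h : Euc (n + m) → Euc m) (K : ℝ≥0),
        LipschitzOnWith K h A →
        upperLintegral (μH[(m : ℝ)] : Measure (Euc m))
            (fun y => μH[d - (m : ℝ)] (A ∩ h ⁻¹' {y})) ≤
          C * (K : ℝ≥0∞) ^ (m : ℕ) * μH[d] A := by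
  classical
  obtain ⟨Cm, hCmtop, hCm1, hCmle⟩ := euc_hausdorff_le m
  refine ⟨Cm, hCmtop, ?_⟩
  intro n d hmd hdn A h K hK
  haveI : NoAtoms (μH[(m:ℝ)] : Measure (Euc m)) :=
    MeasureTheory.Measure.noAtoms_hausdorff (Euc m) (by exact_mod_cast Nat.lt_of_lt_of_le Nat.zero_lt_one hm)
  have hdm : (0:ℝ) ≤ d - m := by linarith
  by_cases hK0 : K = 0
  · subst hK0
    rcases A.eq_empty_or_nonempty with rfl | ⟨a, ha⟩
    · refine le_trans ?_ zero_le
      refine le_trans (iInf_le_of_le (fun _ => 0) (iInf_le_of_le measurable_const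
        (iInf_le_of_le (fun y => by simp) le_rfl))) ?_
      simp
    · have hconst : ∀ x ∈ A, h x = h a := by
        intro x hx
        have := hK hx ha
        simpa [edist_eq_zero] using this
      refine le_trans ?_ zero_le
      have hmeas : Measurable (Set.indicator ({h a} : Set (Euc m)) (fun _ => (⊤:ℝ≥0∞))) :=
        measurable_const.indicator (measurableSet_singleton _)
      have hmaj : ∀ y, μH[d - (m:ℝ)] (A ∩ h ⁻¹' {y}) ≤
          Set.indicator ({h a} : Set (Euc m)) (fun _ => (⊤:ℝ≥0∞)) y := by
        intro y
        by_cases hy : y = h a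
        · simp [hy]
        · have : A ∩ h ⁻¹' {y} = ∅ := by
            ext x
            simp only [Set.mem_inter_iff, Set.mem_preimage, Set.mem_singleton_iff,
              Set.mem_empty_iff_false, iff_false, not_and]
            intro hx hxy
            exact hy ((hconst x hx) ▸ hxy.symm)
          simp [this, Set.indicator_apply, hy]
      refine le_trans (iInf_le_of_le _ (iInf_le_of_le hmeas (iInf_le_of_le hmaj le_rfl))) ?_
      rw [lintegral_indicator (measurableSet_singleton _)]
      simp [measure_singleton]
      exact this.measure_singleton _
  · set x : ℝ≥0∞ := Cm * (K : ℝ≥0∞) ^ (m : ℕ) with hxdef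
    have hx0 : x ≠ 0 := by
      simp only [hxdef, ne_eq, mul_eq_zero, not_or]
      exact ⟨by intro hc; rw [hc] at hCm1; simp at hCm1,
        pow_ne_zero _ (by exact_mod_cast hK0)⟩
    have hxtop : x ≠ ⊤ :=
      ENNReal.mul_ne_top hCmtop (ENNReal.pow_ne_top ENNReal.coe_ne_top)
    by_cases hA : μH[d] A = ⊤
    · rw [hA, ENNReal.mul_top hx0]
      exact le_top
    have key : ∀ ε : ℝ≥0∞, 0 < ε → ε ≠ ⊤ →
        upperLintegral (μH[(m : ℝ)] : Measure (Euc m))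
          (fun y => μH[d - (m : ℝ)] (A ∩ h ⁻¹' {y})) ≤ x * (μH[d] A + ε) := by
      intro ε hε hεtop
      have hcov : ∀ k : ℕ, ∃ t : ℕ → Set (Euc (n + m)), (A ⊆ ⋃ j, t j) ∧
          (∀ j, EMetric.diam (t j) ≤ ((k : ℝ≥0∞) + 1)⁻¹) ∧
          (∑' j, ⨆ _ : (t j).Nonempty, EMetric.diam (t j) ^ d) ≤ μH[d] A + ε := by
        intro k
        have hpos : (0:ℝ≥0∞) < ((k : ℝ≥0∞) + 1)⁻¹ :=
          ENNReal.inv_pos.2 (by simp)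
        have h1 : stage d ((k : ℝ≥0∞) + 1)⁻¹ A ≤ μH[d] A := by
          rw [hausdorff_eq_stage]
          exact le_iSup₂ (f := fun r (_ : 0 < r) => stage d r A) _ hpos
        have h2 : stage d ((k : ℝ≥0∞) + 1)⁻¹ A < μH[d] A + ε :=
          h1.trans_lt (ENNReal.lt_add_right hA hε.ne')
        simp only [stage, iInf_lt_iff] at h2
        obtain ⟨t, ht1, ht2, ht3⟩ := h2
        exact ⟨t, ht1, ht2, ht3.le⟩
      choose t ht1 ht2 ht3 using hcov
      set G : ℕ → Euc m → ℝ≥0∞ := fun k y => ∑' j,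
        Set.indicator (closure (h '' (A ∩ t k j)))
          (fun _ => EMetric.diam (t k j) ^ (d - m)) y with hGdef
      have hGmeas : ∀ k, Measurable (G k) := fun k =>
        Measurable.ennreal_tsum fun j =>
          measurable_const.indicator isClosed_closure.measurableSet
      have hf_le : ∀ y, μH[d - (m : ℝ)] (A ∩ h ⁻¹' {y}) ≤
          Filter.liminf (fun k => G k y) Filter.atTop := by
        intro y
        rw [hausdorff_eq_stage]
        refine iSup₂_le fun r hr => ?_
        obtain ⟨N, hN⟩ := ENNReal.exists_inv_nat_lt hr.ne'
        have hev : ∀ᶠ k : ℕ in Filter.atTop, ((k : ℝ≥0∞) + 1)⁻¹ ≤ r := by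
          filter_upwards [Filter.eventually_ge_atTop N] with k hk
          refine le_trans ?_ hN.le
          apply ENNReal.inv_le_inv.2
          exact_mod_cast le_trans (by exact_mod_cast hk) (le_add_of_nonneg_right zero_le_one)
        refine Filter.le_liminf_of_le (by isBoundedDefault) ?_
        filter_upwards [hev] with k hk
        refine le_trans (stage_anti _ hk _) ?_
        set t' : ℕ → Set (Euc (n + m)) := fun j => A ∩ t k j ∩ h ⁻¹' {y} with ht'def
        have hcov' : A ∩ h ⁻¹' {y} ⊆ ⋃ j, t' j := by
          rintro z ⟨hzA, hzy⟩
          obtain ⟨_, ⟨j, rfl⟩, hj⟩ := ht1 k hzA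
          exact Set.mem_iUnion.2 ⟨j, ⟨hzA, hj⟩, hzy⟩
        have hdia' : ∀ j, EMetric.diam (t' j) ≤ ((k : ℝ≥0∞) + 1)⁻¹ := fun j =>
          le_trans (EMetric.diam_mono (fun z hz => hz.1.2)) (ht2 k j)
        refine le_trans (iInf_le_of_le t' (iInf_le_of_le hcov'
          (iInf_le_of_le hdia' le_rfl))) ?_
        refine ENNReal.tsum_le_tsum fun j => ?_
        refine iSup_le fun hne => ?_
        obtain ⟨z, ⟨⟨hzA, hzt⟩, hzy⟩⟩ := hne
        have hy : y ∈ closure (h '' (A ∩ t k j)) :=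
          subset_closure ⟨z, ⟨hzA, hzt⟩, by simpa using hzy⟩
        rw [Set.indicator_of_mem hy]
        exact ENNReal.rpow_le_rpow (EMetric.diam_mono (fun z hz => hz.1.2)) hdm
      have hInt : ∀ k, (∫⁻ y, G k y ∂(μH[(m : ℝ)] : Measure (Euc m))) ≤
          x * (μH[d] A + ε) := by
        intro k
        rw [hGdef]
        simp only
        rw [lintegral_tsum (fun j =>
          (measurable_const.indicator isClosed_closure.measurableSet).aemeasurable)]
        have hterm : ∀ j, (∫⁻ y, Set.indicator (closure (h '' (A ∩ t k j)))
            (fun _ => EMetric.diam (t k j) ^ (d - m)) y ∂(μH[(m : ℝ)] : Measure (Euc m))) ≤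
            x * ⨆ _ : (t k j).Nonempty, EMetric.diam (t k j) ^ d := by
          intro j
          rw [lintegral_indicator isClosed_closure.measurableSet, setLIntegral_const]
          rcases (A ∩ t k j).eq_empty_or_nonempty with he | hne
          · simp [he]
          · have hne' : (t k j).Nonempty := hne.imp fun z hz => hz.2
            rw [iSup_pos hne']
            have h1 : μH[(m:ℝ)] (closure (h '' (A ∩ t k j))) ≤
                (K : ℝ≥0∞) ^ (m : ℕ) * (Cm * EMetric.diam (t k j) ^ (m : ℝ)) := by
              calc μH[(m:ℝ)] (closure (h '' (A ∩ t k j)))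
                  ≤ Cm * EMetric.diam (closure (h '' (A ∩ t k j))) ^ (m:ℝ) := hCmle _
                _ = Cm * EMetric.diam (h '' (A ∩ t k j)) ^ (m:ℝ) := by
                    rw [show EMetric.diam (closure (h '' (A ∩ t k j))) = EMetric.diam (h '' (A ∩ t k j)) from Metric.ediam_closure _]
                _ ≤ Cm * ((K : ℝ≥0∞) * EMetric.diam (t k j)) ^ (m:ℝ) := by
                    gcongr
                    refine le_trans (lipschitzOnWith_ediam_image_le
                        (hK.mono Set.inter_subset_left)) ?_
                    exact mul_le_mul_right (EMetric.diam_mono Set.inter_subset_right) _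
                _ = (K : ℝ≥0∞) ^ (m : ℕ) * (Cm * EMetric.diam (t k j) ^ (m : ℝ)) := by
                    rw [ENNReal.mul_rpow_of_nonneg _ _ (by positivity), ENNReal.rpow_natCast]
                    ring
            calc EMetric.diam (t k j) ^ (d - m) * μH[(m:ℝ)] (closure (h '' (A ∩ t k j)))
                ≤ EMetric.diam (t k j) ^ (d - m) *
                  ((K : ℝ≥0∞) ^ (m : ℕ) * (Cm * EMetric.diam (t k j) ^ (m : ℝ))) :=
                  mul_le_mul_right h1 _
              _ = x * (EMetric.diam (t k j) ^ (d - m) * EMetric.diam (t k j) ^ (m:ℝ)) := by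
                  rw [hxdef]; ring
              _ = x * EMetric.diam (t k j) ^ d := by
                  rw [← ENNReal.rpow_add_of_nonneg _ _ hdm (by positivity)]
                  norm_num
        calc (∑' j, ∫⁻ y, Set.indicator (closure (h '' (A ∩ t k j)))
              (fun _ => EMetric.diam (t k j) ^ (d - m)) y ∂(μH[(m : ℝ)] : Measure (Euc m)))
            ≤ ∑' j, x * ⨆ _ : (t k j).Nonempty, EMetric.diam (t k j) ^ d :=
              ENNReal.tsum_le_tsum hterm
          _ = x * ∑' j, ⨆ _ : (t k j).Nonempty, EMetric.diam (t k j) ^ d :=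
              ENNReal.tsum_mul_left
          _ ≤ x * (μH[d] A + ε) := mul_le_mul_right (ht3 k) _
      refine le_trans (iInf_le_of_le (fun y => Filter.liminf (fun k => G k y) Filter.atTop)
        (iInf_le_of_le (Measurable.liminf hGmeas)
          (iInf_le_of_le hf_le le_rfl))) ?_
      refine le_trans (lintegral_liminf_le hGmeas) ?_
      refine le_trans (Filter.liminf_le_liminf (Filter.Eventually.of_forall hInt)) ?_
      simp [Filter.liminf_const]
    refine ENNReal.le_of_forall_pos_le_add fun δ hδ _ => ?_
    have hδ' : ((δ : ℝ≥0∞) / x) ≠ ⊤ := by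
      simp [ENNReal.div_eq_top, hx0]
    have := key ((δ : ℝ≥0∞) / x) (ENNReal.div_pos (by exact_mod_cast hδ.ne') hxtop) hδ'
    refine le_trans this ?_
    rw [mul_add, ENNReal.mul_div_cancel hx0 hxtop]


end
end
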